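/- Let H be a hypothesis set of functions from ℝ^d to ℝ that contains the zero function and is regular for adversarial calibration. If a margin-based loss φ : ℝ → [0,∞) is convex and non-increasing, then the supremum-based surrogate φ̃(f,x,y) = sup_{x' : ‖x−x'‖ ≤ γ} φ(y·f(x')) is not H-calibrated with respect to the adversarial 0/1 loss ℓ_γ. -/

import Mathlib

open scoped RealInnerProductSpace

noncomputable section

/-- A loss assigns a value to a predictor `f`, a point `x`, and a label `y` (±1). -/
abbrev Loss (d : ℕ) := ((EuclideanSpace ℝ (Fin d)) → ℝ) → (EuclideanSpace ℝ (Fin d)) → ℝ → ℝ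

variable {d : ℕ}

/-- The inner (conditional) ℓ-risk. -/
def innerRisk (ℓ : Loss d) (f : EuclideanSpace ℝ (Fin d) → ℝ)
    (x : EuclideanSpace ℝ (Fin d)) (η : ℝ) : ℝ :=
  η * ℓ f x 1 + (1 - η) * ℓ f x (-1)

/-- The minimal inner ℓ-risk over a hypothesis set `H`. -/
def minInnerRisk (ℓ : Loss d) (H : Set (EuclideanSpace ℝ (Fin d) → ℝ))
    (x : EuclideanSpace ℝ (Fin d)) (η : ℝ) : ℝ :=
  ⨅ f : H, innerRisk ℓ f x η

/-- ℓ₁ is H-calibrated with respect to ℓ₂. -/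
def Calibrated (H : Set (EuclideanSpace ℝ (Fin d) → ℝ)) (ℓ₁ ℓ₂ : Loss d) : Prop :=
  ∀ ε > (0:ℝ), ∀ η ∈ Set.Icc (0:ℝ) 1, ∀ x : EuclideanSpace ℝ (Fin d), ‖x‖ ≤ 1 →
    ∃ δ > (0:ℝ), ∀ f ∈ H,
      innerRisk ℓ₁ f x η < minInnerRisk ℓ₁ H x η + δ →
      innerRisk ℓ₂ f x η < minInnerRisk ℓ₂ H x η + ε

/-- The adversarial 0/1 loss with perturbation radius γ. -/
def advLoss (γ : ℝ) : Loss d := fun f x y =>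
  ⨆ x' : Metric.closedBall x γ, (if y * f ↑x' ≤ 0 then (1:ℝ) else 0)

/-- A margin-based loss viewed as a loss. -/
def marginLoss (φ : ℝ → ℝ) : Loss d := fun f x y => φ (y * f x)

/-- The supremum-based surrogate of a margin-based loss. -/
def supLoss (γ : ℝ) (φ : ℝ → ℝ) : Loss d := fun f x y =>
  ⨆ x' : Metric.closedBall x γ, φ (y * f ↑x')

/-- Infimum of f over the closed γ-ball around x. -/
def infBall (γ : ℝ) (f : EuclideanSpace ℝ (Fin d) → ℝ) (x : EuclideanSpace ℝ (Fin d)) : ℝ :=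
  ⨅ x' : Metric.closedBall x γ, f ↑x'

/-- Supremum of f over the closed γ-ball around x. -/
def supBall (γ : ℝ) (f : EuclideanSpace ℝ (Fin d) → ℝ) (x : EuclideanSpace ℝ (Fin d)) : ℝ :=
  ⨆ x' : Metric.closedBall x γ, f ↑x'

/-- x is a distinguishing point for H. -/
def Distinguishing (γ : ℝ) (H : Set (EuclideanSpace ℝ (Fin d) → ℝ))
    (x : EuclideanSpace ℝ (Fin d)) : Prop :=
  ‖x‖ ≤ 1 ∧ (∃ f ∈ H, 0 < infBall γ f x) ∧ (∃ g ∈ H, supBall γ g x < 0)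

/-- H is regular for adversarial calibration. -/
def RegularAdv (γ : ℝ) (H : Set (EuclideanSpace ℝ (Fin d) → ℝ)) : Prop :=
  ∃ x, Distinguishing γ H x

/-- H is symmetric. -/
def SymmetricH (H : Set (EuclideanSpace ℝ (Fin d) → ℝ)) : Prop :=
  ∀ f ∈ H, -f ∈ H

/-- Linear hypothesis set. -/
def Hlin (d : ℕ) : Set (EuclideanSpace ℝ (Fin d) → ℝ) :=
  { f | ∃ w : EuclideanSpace ℝ (Fin d), ‖w‖ = 1 ∧ f = fun x => (inner ℝ w x : ℝ) }

/-- Generalized linear hypothesis set. -/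
def Hg (d : ℕ) (g : ℝ → ℝ) (G : ℝ) : Set (EuclideanSpace ℝ (Fin d) → ℝ) :=
  { f | ∃ (w : EuclideanSpace ℝ (Fin d)) (b : ℝ), ‖w‖ = 1 ∧ |b| ≤ G ∧
      f = fun x => g (inner ℝ w x : ℝ) + b }

/-- ReLU-based hypothesis set. -/
def Hrelu (d : ℕ) (G : ℝ) : Set (EuclideanSpace ℝ (Fin d) → ℝ) :=
  Hg d (fun t => max t 0) G

/-- One-layer ReLU neural network hypothesis set. -/
def Hnn (d n : ℕ) (Λ W : ℝ) : Set (EuclideanSpace ℝ (Fin d) → ℝ) :=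
  { f | ∃ (u : Fin n → ℝ) (w : Fin n → EuclideanSpace ℝ (Fin d)),
      (∑ j, |u j|) ≤ Λ ∧ (∀ j, ‖w j‖ ≤ W) ∧
      f = fun x => ∑ j, u j * max (inner ℝ (w j) x : ℝ) 0 }

/-- All (Borel) measurable functions. -/
def Hall (d : ℕ) : Set (EuclideanSpace ℝ (Fin d) → ℝ) :=
  { f | Measurable f }

/-- The ρ-margin loss. -/
def phiRho (ρ t : ℝ) : ℝ := min 1 (max 0 (1 - t / ρ))


/-!
At a distinguishing point `x` with `η = 1/2`, convexity gives `φ 0 ≤ (φ t + φ (-t)) / 2`, so the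
zero predictor minimizes the surrogate inner risk; yet it errs on both labels and has adversarial
inner risk `1`, against `1/2` for a predictor that is positive on the ball around `x`.
The zero predictor can fail to be a minimizer only when one of the suprema defining the surrogate
is unbounded, hence `0` in `ℝ`. The responsible predictor is then a surrogate minimizer at `η = 1`
or `η = 0`, but since `φ` is antitone it errs on the corresponding label somewhere in the ball,
while one of the two distinguishing predictors does not.
-/

section AdversarialLosses

variable {γ : ℝ} {x : EuclideanSpace ℝ (Fin d)} {φ : ℝ → ℝ}
  {H : Set (EuclideanSpace ℝ (Fin d) → ℝ)}

theorem innerRisk_one (ℓ : Loss d) (f : EuclideanSpace ℝ (Fin d) → ℝ) :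
    innerRisk ℓ f x 1 = ℓ f x 1 := by
  simp [innerRisk]

theorem innerRisk_zero (ℓ : Loss d) (f : EuclideanSpace ℝ (Fin d) → ℝ) :
    innerRisk ℓ f x 0 = ℓ f x (-1) := by
  simp [innerRisk]

theorem innerRisk_nonneg {ℓ : Loss d} {f : EuclideanSpace ℝ (Fin d) → ℝ} {η : ℝ}
    (hℓ : ∀ y, 0 ≤ ℓ f x y) (hη : η ∈ Set.Icc (0 : ℝ) 1) : 0 ≤ innerRisk ℓ f x η :=
  add_nonneg (mul_nonneg hη.1 (hℓ 1)) (mul_nonneg (sub_nonneg.2 hη.2) (hℓ (-1)))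

theorem not_calibrated_of_minimizer {ℓ₁ ℓ₂ : Loss d} {η : ℝ} {f g : EuclideanSpace ℝ (Fin d) → ℝ}
    (hx : ‖x‖ ≤ 1) (hη : η ∈ Set.Icc (0 : ℝ) 1) (hf : f ∈ H) (hg : g ∈ H)
    (hmin : ∀ h ∈ H, innerRisk ℓ₁ f x η ≤ innerRisk ℓ₁ h x η)
    (hℓ₂ : ∀ h y, 0 ≤ ℓ₂ h x y) (hgap : innerRisk ℓ₂ g x η < innerRisk ℓ₂ f x η) :
    ¬ Calibrated H ℓ₁ ℓ₂ := by
  intro hcal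
  obtain ⟨δ, hδ, hcal⟩ := hcal _ (sub_pos.2 hgap) η hη x hx
  have : Nonempty H := ⟨⟨f, hf⟩⟩
  have hf_opt : innerRisk ℓ₁ f x η ≤ minInnerRisk ℓ₁ H x η := le_ciInf fun h => hmin h h.2
  have hg_bound : minInnerRisk ℓ₂ H x η ≤ innerRisk ℓ₂ g x η :=
    ciInf_le (⟨0, by rintro _ ⟨h, rfl⟩; exact innerRisk_nonneg (hℓ₂ h) hη⟩ :
      BddBelow (Set.range fun h : H => innerRisk ℓ₂ h x η)) ⟨g, hg⟩
  linarith [hcal f hf (by linarith)]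

theorem advLoss_nonneg (f : EuclideanSpace ℝ (Fin d) → ℝ) (y : ℝ) : 0 ≤ advLoss γ f x y :=
  Real.iSup_nonneg fun _ => by split_ifs <;> norm_num

theorem advLoss_eq_one {f : EuclideanSpace ℝ (Fin d) → ℝ} {y : ℝ}
    (h : ∃ x' : Metric.closedBall x γ, y * f x' ≤ 0) : advLoss γ f x y = 1 := by
  obtain ⟨x', hx'⟩ := h
  have : Nonempty (Metric.closedBall x γ) := ⟨x'⟩
  refine le_antisymm (ciSup_le fun _ => by split_ifs <;> norm_num) ?_
  have hbdd : BddAbove (Set.range fun x' : Metric.closedBall x γ =>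
      if y * f x' ≤ 0 then (1 : ℝ) else 0) :=
    ⟨1, by rintro _ ⟨_, rfl⟩; dsimp only; split_ifs <;> norm_num⟩
  simpa [advLoss, hx'] using le_ciSup hbdd x'

theorem advLoss_eq_zero {f : EuclideanSpace ℝ (Fin d) → ℝ} {y : ℝ}
    (h : ∀ x' : Metric.closedBall x γ, 0 < y * f x') : advLoss γ f x y = 0 := by
  simp [advLoss, fun x' => not_le.2 (h x')]

theorem pos_of_infBall_pos {f : EuclideanSpace ℝ (Fin d) → ℝ} (hf : 0 < infBall γ f x)
    (x' : Metric.closedBall x γ) : 0 < f x' := by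
  by_cases hbdd : BddBelow (Set.range fun x' : Metric.closedBall x γ => f x')
  · exact hf.trans_le (ciInf_le hbdd x')
  · exact absurd (Real.iInf_of_not_bddBelow hbdd) hf.ne'

theorem neg_of_supBall_neg {f : EuclideanSpace ℝ (Fin d) → ℝ} (hf : supBall γ f x < 0)
    (x' : Metric.closedBall x γ) : f x' < 0 := by
  by_cases hbdd : BddAbove (Set.range fun x' : Metric.closedBall x γ => f x')
  · exact (le_ciSup hbdd x').trans_lt hf
  · exact absurd (Real.iSup_of_not_bddAbove hbdd) hf.ne

theorem supLoss_nonneg (hφ0 : ∀ t, 0 ≤ φ t) (f : EuclideanSpace ℝ (Fin d) → ℝ) (y : ℝ) :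
    0 ≤ supLoss γ φ f x y :=
  Real.iSup_nonneg fun _ => hφ0 _

theorem exists_mul_nonpos_of_not_bddAbove (hanti : Antitone φ)
    {f : EuclideanSpace ℝ (Fin d) → ℝ} {y : ℝ}
    (h : ¬ BddAbove (Set.range fun x' : Metric.closedBall x γ => φ (y * f x'))) :
    ∃ x' : Metric.closedBall x γ, y * f x' ≤ 0 := by
  by_contra! hpos
  exact h ⟨φ 0, by rintro _ ⟨x', rfl⟩; exact hanti (hpos x').le⟩

theorem le_innerRisk_supLoss_half (hγ : 0 ≤ γ) (hconv : ConvexOn ℝ Set.univ φ)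
    {f : EuclideanSpace ℝ (Fin d) → ℝ}
    (h₁ : BddAbove (Set.range fun x' : Metric.closedBall x γ => φ (1 * f x')))
    (h₂ : BddAbove (Set.range fun x' : Metric.closedBall x γ => φ (-1 * f x'))) :
    φ 0 ≤ innerRisk (supLoss γ φ) f x (1 / 2) := by
  let x₀ : Metric.closedBall x γ := ⟨x, Metric.mem_closedBall_self hγ⟩
  have hmid : φ 0 ≤ 1 / 2 * φ (f x) + 1 / 2 * φ (-f x) := by
    simpa using hconv.2 (Set.mem_univ (f x)) (Set.mem_univ (-f x))
      (by norm_num : (0 : ℝ) ≤ 1 / 2) (by norm_num : (0 : ℝ) ≤ 1 / 2) (by norm_num)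
  calc φ 0 ≤ 1 / 2 * φ (1 * f x₀) + (1 - 1 / 2) * φ (-1 * f x₀) := by
        norm_num at hmid ⊢; linarith
    _ ≤ innerRisk (supLoss γ φ) f x (1 / 2) := by
        unfold innerRisk supLoss
        gcongr
        · exact le_ciSup h₁ x₀
        · exact le_ciSup h₂ x₀

theorem not_calibrated_supLoss_of_zero_minimizer (hγ : 0 ≤ γ) (hx : ‖x‖ ≤ 1)
    (h0 : (fun _ => (0 : ℝ)) ∈ H) (hmin : ∀ h ∈ H, φ 0 ≤ innerRisk (supLoss γ φ) h x (1 / 2))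
    {f : EuclideanSpace ℝ (Fin d) → ℝ} (hf : f ∈ H)
    (hfpos : ∀ x' : Metric.closedBall x γ, 0 < f x') :
    ¬ Calibrated H (supLoss γ φ) (advLoss γ) := by
  let x₀ : Metric.closedBall x γ := ⟨x, Metric.mem_closedBall_self hγ⟩
  have : Nonempty (Metric.closedBall x γ) := ⟨x₀⟩
  refine not_calibrated_of_minimizer (η := 1 / 2) hx ⟨by norm_num, by norm_num⟩ h0 hf ?_
    advLoss_nonneg ?_
  · intro h hh
    have h0_risk : innerRisk (supLoss γ φ) (fun _ => (0 : ℝ)) x (1 / 2) = φ 0 := by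
      simp only [innerRisk, supLoss, mul_zero, ciSup_const]
      ring
    exact h0_risk ▸ hmin h hh
  · rw [innerRisk, innerRisk, advLoss_eq_zero (by simpa using hfpos),
      advLoss_eq_one ⟨x₀, by linarith [hfpos x₀]⟩, advLoss_eq_one ⟨x₀, by simp⟩,
      advLoss_eq_one ⟨x₀, by simp⟩]
    norm_num

theorem not_calibrated_supLoss_of_not_bddAbove (hφ0 : ∀ t, 0 ≤ φ t) (hanti : Antitone φ)
    {η y : ℝ} (hx : ‖x‖ ≤ 1) (hη : η ∈ Set.Icc (0 : ℝ) 1)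
    (hηy : ∀ (ℓ : Loss d) f, innerRisk ℓ f x η = ℓ f x y)
    {h g : EuclideanSpace ℝ (Fin d) → ℝ} (hh : h ∈ H)
    (hunb : ¬ BddAbove (Set.range fun x' : Metric.closedBall x γ => φ (y * h x')))
    (hg : g ∈ H) (hgpos : ∀ x' : Metric.closedBall x γ, 0 < y * g x') :
    ¬ Calibrated H (supLoss γ φ) (advLoss γ) := by
  -- an unbounded supremum is `0` in `ℝ`, which makes `h` a minimizer of the surrogate risk
  have hsup_zero : supLoss γ φ h x y = 0 := Real.iSup_of_not_bddAbove hunb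
  refine not_calibrated_of_minimizer hx hη hh hg ?_ advLoss_nonneg ?_
  · intro f _
    rw [hηy, hηy, hsup_zero]
    exact supLoss_nonneg hφ0 f y
  · rw [hηy, hηy, advLoss_eq_zero hgpos,
      advLoss_eq_one (exists_mul_nonpos_of_not_bddAbove hanti hunb)]
    norm_num

end AdversarialLosses

theorem stmt7_general (d : ℕ) (γ : ℝ) (hγ0 : 0 < γ)
    (H : Set (EuclideanSpace ℝ (Fin d) → ℝ))
    (h0 : (fun _ => (0:ℝ)) ∈ H) (hreg : RegularAdv γ H)
    (φ : ℝ → ℝ) (hφ0 : ∀ t, 0 ≤ φ t) (hconv : ConvexOn ℝ Set.univ φ)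
    (hanti : Antitone φ) :
    ¬ Calibrated H (supLoss γ φ) (advLoss γ) := by
  obtain ⟨x, hx, ⟨f, hf, hfpos⟩, ⟨g, hg, hgneg⟩⟩ := hreg
  by_cases hzero : ∀ h ∈ H, φ 0 ≤ innerRisk (supLoss γ φ) h x (1 / 2)
  · exact not_calibrated_supLoss_of_zero_minimizer hγ0.le hx h0 hzero hf
      (pos_of_infBall_pos hfpos)
  obtain ⟨h, hh, hlt⟩ : ∃ h ∈ H, innerRisk (supLoss γ φ) h x (1 / 2) < φ 0 := by
    simpa using hzero
  by_cases hbdd : BddAbove (Set.range fun x' : Metric.closedBall x γ => φ (1 * h x'))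
  · have hunb : ¬ BddAbove (Set.range fun x' : Metric.closedBall x γ => φ (-1 * h x')) :=
      fun hbdd' => hlt.not_ge (le_innerRisk_supLoss_half hγ0.le hconv hbdd hbdd')
    exact not_calibrated_supLoss_of_not_bddAbove hφ0 hanti hx ⟨le_rfl, zero_le_one⟩
      innerRisk_zero hh hunb hg fun x' => by linarith [neg_of_supBall_neg hgneg x']
  · exact not_calibrated_supLoss_of_not_bddAbove hφ0 hanti hx ⟨zero_le_one, le_rfl⟩
      innerRisk_one hh hbdd hf fun x' => by simpa using pos_of_infBall_pos hfpos x'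

theorem stmt7 (d : ℕ) (hd : 1 ≤ d) (γ : ℝ) (hγ0 : 0 < γ) (hγ1 : γ < 1)
    (H : Set (EuclideanSpace ℝ (Fin d) → ℝ))
    (h0 : (fun _ => (0:ℝ)) ∈ H) (hreg : RegularAdv γ H)
    (φ : ℝ → ℝ) (hφ0 : ∀ t, 0 ≤ φ t) (hconv : ConvexOn ℝ Set.univ φ)
    (hanti : Antitone φ) :
    ¬ Calibrated H (supLoss γ φ) (advLoss γ) :=
  stmt7_general d γ hγ0 H h0 hreg φ hφ0 hconv hanti
end
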